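/- arXiv:1903.11135 — 2 statements merged into one kernel-verified Lean document; each statement's English description precedes it below -/
import Mathlib

section
/- Let d ≥ 4 and let Γ = {p₀, p₁, …, p_d} be a collection of d + 1 ≥ 5 distinct points in ℙ²(ℂ) such that no d of the points are collinear. Then for every point p ∈ Γ there exists a homogeneous polynomial of degree d − 2 in three variables that vanishes at every point of Γ \ {p} but does not vanish at p. -/
/-!
Fix `p ∈ Γ` and cut out the other `d` points by `d - 2` lines missing `p`. A line through `p`
meets `Γ \ {p}` in at most `d - 2` points, since otherwise it would contain `d` points of `Γ`.
Grouping the points of `Γ \ {p}` by the line joining them to `p`, every group therefore misses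
at least two points, so `Γ \ {p}` contains two disjoint pairs `{a, b}`, `{c, e}` with neither
line `ab` nor `ce` passing through `p`. These two lines, together with one line through
each of the remaining `d - 4` points and missing `p`, give the curve.
-/

open MvPolynomial

namespace MvPolynomial

variable {σ K : Type*} [Fintype σ] [DecidableEq σ]

theorem exists_isHomogeneous_one_eval_eq [CommSemiring K] (L : (σ → K) →ₗ[K] K) :
    ∃ F : MvPolynomial σ K, F.IsHomogeneous 1 ∧ ∀ v, eval v F = L v :=
  ⟨∑ i, C (L (Pi.single i 1)) * X i, .sum _ _ _ fun i _ => isHomogeneous_C_mul_X _ i,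
    fun v => by
      simp only [L.pi_apply_eq_sum_univ v, map_sum, map_mul, eval_C, eval_X, smul_eq_mul, mul_comm]
      congr! with i
      simp [Pi.single_apply, eq_comm]⟩

theorem exists_isHomogeneous_eval_eq_multiset_prod [CommSemiring K]
    (M : Multiset ((σ → K) →ₗ[K] K)) :
    ∃ F : MvPolynomial σ K, F.IsHomogeneous (Multiset.card M) ∧
      ∀ v, eval v F = (M.map fun L => L v).prod := by
  induction M using Multiset.induction_on with
  | empty => exact ⟨1, isHomogeneous_one σ K, by simp⟩
  | cons L M ih =>
    obtain ⟨F, hF, hFv⟩ := ih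
    obtain ⟨G, hG, hGv⟩ := exists_isHomogeneous_one_eval_eq L
    refine ⟨G * F, ?_, by simp [hFv, hGv]⟩
    simpa [add_comm] using hG.mul hF

end MvPolynomial

open Finset in
theorem Finset.exists_two_disjoint_pairs_of_card_fiber_le {α β : Type*} [DecidableEq α]
    (s : Finset α) (f : α → β) (hs : 4 ≤ #s)
    (hf : ∀ a ∈ s, ∀ t ⊆ s, (∀ x ∈ t, f x = f a) → #t + 2 ≤ #s) :
    ∃ a ∈ s, ∃ b ∈ s, ∃ c ∈ s, ∃ e ∈ s,
      f a ≠ f b ∧ f c ≠ f e ∧ Disjoint ({a, b} : Finset α) {c, e} := by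
  have exists_label_ne : ∀ a ∈ s, ∃ b ∈ s, f b ≠ f a := by
    intro a ha
    by_contra! h
    have := hf a ha s Subset.rfl h
    omega
  obtain ⟨a, ha⟩ : s.Nonempty := card_pos.1 (by omega)
  obtain ⟨b, hb, hba⟩ := exists_label_ne a ha
  have hab : a ≠ b := fun h => hba (h ▸ rfl)
  set t := (s.erase a).erase b with ht
  have hbt : b ∉ t := by simp [ht]
  have hat : a ∉ t := by simp [ht]
  have htcard : #t + 2 = #s := by
    rw [ht, card_erase_of_mem (mem_erase.2 ⟨hab.symm, hb⟩), card_erase_of_mem ha]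
    omega
  have hts : t ⊆ s := (erase_subset _ _).trans (erase_subset _ _)
  by_cases hsplit : ∃ c ∈ t, ∃ e ∈ t, f c ≠ f e
  · obtain ⟨c, hc, e, he, hce⟩ := hsplit
    refine ⟨a, ha, b, hb, c, hts hc, e, hts he, hba.symm, hce, ?_⟩
    simp only [disjoint_left, mem_insert, mem_singleton]
    rintro x (rfl | rfl) (rfl | rfl) <;> simp_all
  · push Not at hsplit
    -- all of `t` lies in one fiber, which then cannot contain `a` or `b`
    obtain ⟨c, hc⟩ : t.Nonempty := card_pos.1 (by omega)
    obtain ⟨e, he, hec⟩ : ∃ e ∈ t, e ≠ c := exists_mem_ne (by omega) c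
    have label_ne : ∀ x ∈ s, x ∉ t → f x ≠ f c := by
      intro x hx hxt hxc
      have := hf c (hts hc) (insert x t) (insert_subset hx hts) fun y hy => by
        rcases mem_insert.1 hy with rfl | hy
        exacts [hxc, hsplit y hy c hc]
      rw [card_insert_of_notMem hxt] at this
      omega
    refine ⟨a, ha, c, hts hc, b, hb, e, hts he, label_ne a ha hat, ?_, ?_⟩
    · exact hsplit e he c hc ▸ label_ne b hb hbt
    · simp only [disjoint_left, mem_insert, mem_singleton]
      rintro x (rfl | rfl) (rfl | rfl) <;> simp_all

open Module Submodule
open scoped Finset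
open scoped LinearAlgebra.Projectivization

namespace Projectivization

variable {K V : Type*} [Field K] [AddCommGroup V] [Module K V]

theorem rep_notMem_span_singleton {p q : ℙ K V} (h : p ≠ q) : p.rep ∉ K ∙ q.rep := by
  intro hpq
  obtain ⟨c, hc⟩ := mem_span_singleton.1 hpq
  apply h
  rw [← p.mk_rep, ← q.mk_rep, mk_eq_mk_iff' K _ _ p.rep_nonzero q.rep_nonzero]
  exact ⟨c, hc⟩

theorem span_pair_rep_eq_of_mem {p a b : ℙ K V} (ha : a ≠ p) (hb : b ≠ p)
    (h : p.rep ∈ span K {a.rep, b.rep}) :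
    span K {p.rep, a.rep} = span K {p.rep, b.rep} := by
  have hb' : b.rep ∈ span K {p.rep, a.rep} := by
    rw [Set.pair_comm] at h
    exact mem_span_insert_exchange h (rep_notMem_span_singleton ha.symm)
  have ha' : a.rep ∈ span K {p.rep, b.rep} :=
    mem_span_insert_exchange h (rep_notMem_span_singleton hb.symm)
  apply le_antisymm <;> rw [span_le, Set.insert_subset_iff, Set.singleton_subset_iff] <;>
    exact ⟨subset_span (Set.mem_insert _ _), by assumption⟩

theorem span_pair_lt_top (h : 2 < finrank K V) (x y : V) : span K {x, y} < ⊤ := by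
  classical
  refine lt_top_of_finrank_lt_finrank (lt_of_le_of_lt ?_ h)
  have := finrank_span_finset_le_card (R := K) ({x, y} : Finset V)
  rw [Finset.coe_pair] at this
  exact this.trans Finset.card_le_two

theorem card_lt_of_forall_rep_mem {Γ : Finset (ℙ K V)} {d : ℕ}
    (hΓ : ¬ ∃ L : V →ₗ[K] K, L ≠ 0 ∧ ∃ S ⊆ Γ, d ≤ S.card ∧ ∀ q ∈ S, L q.rep = 0)
    {W : Submodule K V} (hW : W < ⊤) {S : Finset (ℙ K V)} (hS : S ⊆ Γ)
    (hSW : ∀ q ∈ S, q.rep ∈ W) : #S < d := by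
  obtain ⟨L, hL, hWL⟩ := W.exists_le_ker_of_lt_top hW
  by_contra! hd
  exact hΓ ⟨L, hL, S, hS, hd, fun q hq => hWL (hSW q hq)⟩

-- The kernels of the forms in `M` are lines missing `p` whose union contains `T`.
def IsAvoidingCover (M : Multiset (V →ₗ[K] K)) (p : ℙ K V) (T : Finset (ℙ K V)) : Prop :=
  (∀ L ∈ M, L p.rep ≠ 0) ∧ ∀ q ∈ T, ∃ L ∈ M, L q.rep = 0

theorem IsAvoidingCover.exists_isHomogeneous {σ : Type*} [Fintype σ] [DecidableEq σ]
    {M : Multiset ((σ → K) →ₗ[K] K)} {p : ℙ K (σ → K)}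
    {T : Finset (ℙ K (σ → K))} (hM : IsAvoidingCover M p T) :
    ∃ F : MvPolynomial σ K, F.IsHomogeneous (Multiset.card M) ∧
      (∀ q ∈ T, MvPolynomial.eval q.rep F = 0) ∧ MvPolynomial.eval p.rep F ≠ 0 := by
  obtain ⟨F, hF, hFv⟩ := MvPolynomial.exists_isHomogeneous_eval_eq_multiset_prod M
  refine ⟨F, hF, fun q hq => ?_, ?_⟩
  · obtain ⟨L, hL, hLq⟩ := hM.2 q hq
    rw [hFv]
    exact Multiset.prod_eq_zero (Multiset.mem_map.2 ⟨L, hL, hLq⟩)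
  · rw [hFv, Ne, Multiset.prod_eq_zero_iff, Multiset.mem_map, not_exists]
    exact fun L ⟨hL, hLp⟩ => hM.1 L hL hLp

variable [DecidableEq (ℙ K V)]

theorem card_add_two_le_of_forall_span_pair_eq (hV : 2 < finrank K V) {Γ : Finset (ℙ K V)}
    {d : ℕ} (hΓ : ¬ ∃ L : V →ₗ[K] K, L ≠ 0 ∧ ∃ S ⊆ Γ, d ≤ S.card ∧ ∀ q ∈ S, L q.rep = 0)
    {p a : ℙ K V} (hp : p ∈ Γ) {t : Finset (ℙ K V)} (ht : t ⊆ Γ.erase p)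
    (hta : ∀ x ∈ t, span K {p.rep, x.rep} = span K {p.rep, a.rep}) : #t + 2 ≤ d := by
  have hpt : p ∉ t := fun h => Finset.notMem_erase p Γ (ht h)
  have := card_lt_of_forall_rep_mem hΓ (span_pair_lt_top hV p.rep a.rep) (S := insert p t)
    (Finset.insert_subset hp (ht.trans (Finset.erase_subset p Γ))) fun q hq => by
      rcases Finset.mem_insert.1 hq with rfl | hq
      · exact subset_span (Set.mem_insert _ _)
      · exact hta q hq ▸ subset_span (Set.mem_insert_of_mem _ rfl)
  rw [Finset.card_insert_of_notMem hpt] at this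
  omega

theorem IsAvoidingCover.add {M N : Multiset (V →ₗ[K] K)} {p : ℙ K V} {T U : Finset (ℙ K V)}
    (hM : IsAvoidingCover M p T) (hN : IsAvoidingCover N p U) :
    IsAvoidingCover (M + N) p (T ∪ U) := by
  refine ⟨fun L hL => ?_, fun q hq => ?_⟩
  · rcases Multiset.mem_add.1 hL with hL | hL
    exacts [hM.1 L hL, hN.1 L hL]
  · rcases Finset.mem_union.1 hq with hq | hq
    · obtain ⟨L, hL, hLq⟩ := hM.2 q hq
      exact ⟨L, Multiset.mem_add.2 (.inl hL), hLq⟩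
    · obtain ⟨L, hL, hLq⟩ := hN.2 q hq
      exact ⟨L, Multiset.mem_add.2 (.inr hL), hLq⟩

theorem exists_isAvoidingCover_pair {p a b : ℙ K V} (h : p.rep ∉ span K {a.rep, b.rep}) :
    ∃ L : V →ₗ[K] K, IsAvoidingCover {L} p {a, b} := by
  obtain ⟨L, hLp, hL⟩ := exists_le_ker_of_notMem h
  refine ⟨L, by simpa using hLp, fun q hq => ⟨L, Multiset.mem_singleton_self L, hL ?_⟩⟩
  rcases Finset.mem_insert.1 hq with rfl | hq
  · exact subset_span (Set.mem_insert _ _)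
  · rw [Finset.mem_singleton.1 hq]
    exact subset_span (Set.mem_insert_of_mem _ rfl)

theorem exists_isAvoidingCover_card {p : ℙ K V} {T : Finset (ℙ K V)} (hp : p ∉ T) :
    ∃ M, Multiset.card M = T.card ∧ IsAvoidingCover M p T := by
  induction T using Finset.induction_on with
  | empty => exact ⟨0, rfl, by simp [IsAvoidingCover]⟩
  | insert q T hqT ih =>
    obtain ⟨M, hMcard, hM⟩ := ih (fun h => hp (Finset.mem_insert_of_mem h))
    obtain ⟨L, hL⟩ := exists_isAvoidingCover_pair (p := p) (a := q) (b := q) (by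
      simpa using rep_notMem_span_singleton (ne_of_mem_of_not_mem (Finset.mem_insert_self q T) hp).symm)
    refine ⟨{L} + M, by simp [hMcard, Finset.card_insert_of_notMem hqT, add_comm], ?_⟩
    simpa using hL.add hM

theorem exists_isHomogeneous_separating_point {σ : Type*} [Fintype σ] [DecidableEq σ]
    (hσ : 2 < Fintype.card σ) {d : ℕ} (hd : 4 ≤ d) {Γ : Finset (ℙ K (σ → K))} (hΓ : #Γ = d + 1)
    (hncol : ¬ ∃ L : (σ → K) →ₗ[K] K, L ≠ 0 ∧
      ∃ S ⊆ Γ, d ≤ S.card ∧ ∀ q ∈ S, L q.rep = 0)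
    {p : ℙ K (σ → K)} (hp : p ∈ Γ) :
    ∃ F : MvPolynomial σ K, F.IsHomogeneous (d - 2) ∧
      (∀ q ∈ Γ, q ≠ p → MvPolynomial.eval q.rep F = 0) ∧ MvPolynomial.eval p.rep F ≠ 0 := by
  classical
  have hcard : #(Γ.erase p) = d := by rw [Finset.card_erase_of_mem hp, hΓ, Nat.add_sub_cancel]
  obtain ⟨a, ha, b, hb, c, hc, e, he, hab, hce, hdisj⟩ :=
    (Γ.erase p).exists_two_disjoint_pairs_of_card_fiber_le (fun q => span K {p.rep, q.rep})
      (by omega) fun a _ t ht hta => hcard ▸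
        card_add_two_le_of_forall_span_pair_eq (by simpa using hσ) hncol hp ht hta
  obtain ⟨L₁, hL₁⟩ := exists_isAvoidingCover_pair <|
    mt (span_pair_rep_eq_of_mem (Finset.ne_of_mem_erase ha) (Finset.ne_of_mem_erase hb)) hab
  obtain ⟨L₂, hL₂⟩ := exists_isAvoidingCover_pair <|
    mt (span_pair_rep_eq_of_mem (Finset.ne_of_mem_erase hc) (Finset.ne_of_mem_erase he)) hce
  set pairs : Finset (ℙ K (σ → K)) := {a, b} ∪ {c, e}
  have hpairs : pairs ⊆ Γ.erase p := by
    simp [pairs, Finset.insert_subset_iff, ha, hb, hc, he]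
  obtain ⟨M, hMcard, hM⟩ := exists_isAvoidingCover_card (T := Γ.erase p \ pairs)
    fun h => Finset.notMem_erase p Γ (Finset.mem_sdiff.1 h).1
  have hcover := (hL₁.add hL₂).add hM
  rw [Finset.union_sdiff_of_subset hpairs] at hcover
  obtain ⟨F, hF, hFΓ, hFp⟩ := hcover.exists_isHomogeneous
  refine ⟨F, ?_, fun q hq hqp => hFΓ q (Finset.mem_erase.2 ⟨hqp, hq⟩), hFp⟩
  have : #pairs = 4 := by
    rw [Finset.card_union_of_disjoint hdisj, Finset.card_pair (by rintro rfl; exact hab rfl),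
      Finset.card_pair (by rintro rfl; exact hce rfl)]
  convert hF using 1
  simp [hMcard, Finset.card_sdiff_of_subset hpairs, hcard, this]
  omega

end Projectivization

/-- If no `d` of a collection of `d + 1 ≥ 5` distinct points in `ℙ²(ℂ)`
are collinear, then the points impose independent linear conditions on plane curves of
degree `d - 2`: for every point `p` of the collection there is a homogeneous polynomial
of degree `d - 2` vanishing at all the other points but not at `p`. -/
theorem points_no_d_collinear_impose_independent_conditions
    (d : ℕ) (hd : 4 ≤ d)
    (Γ : Finset (Projectivization ℂ (Fin 3 → ℂ))) (hΓ : Γ.card = d + 1)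
    (hncol : ¬ ∃ L : (Fin 3 → ℂ) →ₗ[ℂ] ℂ, L ≠ 0 ∧
      ∃ S : Finset (Projectivization ℂ (Fin 3 → ℂ)), S ⊆ Γ ∧ d ≤ S.card ∧
        ∀ q ∈ S, L q.rep = 0) :
    ∀ p ∈ Γ, ∃ F : MvPolynomial (Fin 3) ℂ, F.IsHomogeneous (d - 2) ∧
      (∀ q ∈ Γ, q ≠ p → MvPolynomial.eval q.rep F = 0) ∧
      MvPolynomial.eval p.rep F ≠ 0 :=
  fun _ hp => Projectivization.exists_isHomogeneous_separating_point (by simp) hd hΓ hncol hp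
end

section
/- Let p₀ ∈ ℙ²(ℂ) and let S be a finite set of n ≥ 2 points of ℙ²(ℂ) with p₀ ∉ S, such that every projective line through p₀ contains at most one point of S (i.e., no two distinct points of S are collinear with p₀). Then there exists a homogeneous polynomial F of degree ⌈n/2⌉ in ℂ[X₀, X₁, X₂] that vanishes at every point of S but does not vanish at p₀. -/
/-!
Pair up the points of `S`. For a pair `p ≠ q`, the span of their representatives is a plane of
`ℂ³`; if it contained `p₀`, a linear form vanishing on that plane would cut out a line through
`p₀`, `p` and `q`. So some linear form vanishes at `p` and `q` but not at `p₀`; a leftover point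
`p ≠ p₀` is handled alone. The product of these `⌈n/2⌉` linear forms is the required polynomial.
-/

namespace MvPolynomial

variable {σ R : Type*} [Fintype σ] [DecidableEq σ] [CommRing R]

noncomputable def ofLinearForm (L : (σ → R) →ₗ[R] R) : MvPolynomial σ R :=
  ∑ i, C (L fun j => if i = j then 1 else 0) * X i

theorem isHomogeneous_ofLinearForm (L : (σ → R) →ₗ[R] R) : (ofLinearForm L).IsHomogeneous 1 :=
  IsHomogeneous.sum _ _ _ fun i _ => by
    simpa using (isHomogeneous_C σ _).mul (isHomogeneous_X R i)

@[simp]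
theorem eval_ofLinearForm (L : (σ → R) →ₗ[R] R) (v : σ → R) : eval v (ofLinearForm L) = L v := by
  simp [ofLinearForm, L.pi_apply_eq_sum_univ v, mul_comm]

end MvPolynomial

section LinearForms

variable {K V : Type*} [Field K] [AddCommGroup V] [Module K V]

theorem Submodule.exists_dual_forall_apply_eq_zero_of_notMem_span {s : Set V} {w : V}
    (hw : w ∉ Submodule.span K s) : ∃ f : V →ₗ[K] K, (∀ x ∈ s, f x = 0) ∧ f w ≠ 0 := by
  obtain ⟨f, hfw, hf⟩ := Submodule.exists_dual_map_eq_bot_of_notMem hw inferInstance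
  exact ⟨f, fun x hx => LinearMap.le_ker_iff_map.mpr hf (Submodule.subset_span hx), hfw⟩

theorem notMem_span_pair_of_forall_dual [FiniteDimensional K V] (hV : 2 < Module.finrank K V)
    {u v w : V} (h : ∀ f : V →ₗ[K] K, f ≠ 0 → f w = 0 → f u = 0 → f v = 0 → False) :
    w ∉ Submodule.span K {u, v} := by
  intro hw
  have hlt : Submodule.span K {u, v} < ⊤ := by
    refine Submodule.lt_top_of_finrank_lt_finrank ?_
    classical
    calc Module.finrank K (Submodule.span K ({u, v} : Set V))
        ≤ ({u, v} : Finset V).card :=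
          mod_cast finrank_span_finset_le_card (R := K) ({u, v} : Finset V)
      _ ≤ 2 := Finset.card_le_two
      _ < Module.finrank K V := hV
  obtain ⟨f, hf, hker⟩ := Submodule.exists_dual_map_eq_bot_of_lt_top hlt inferInstance
  have hvan : ∀ x ∈ Submodule.span K {u, v}, f x = 0 := fun x hx =>
    LinearMap.le_ker_iff_map.mpr hker hx
  exact h f hf (hvan w hw) (hvan u (Submodule.subset_span (by simp)))
    (hvan v (Submodule.subset_span (by simp)))

theorem Projectivization.rep_notMem_span_rep {p q : Projectivization K V} (h : p ≠ q) :
    p.rep ∉ K ∙ q.rep := fun hpq => h <| by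
  rw [← p.mk_rep, ← q.mk_rep, Projectivization.mk_eq_mk_iff']
  exact Submodule.mem_span_singleton.mp hpq

theorem Projectivization.rep_injective :
    Function.Injective (Projectivization.rep : Projectivization K V → V) := fun p q h => by
  rw [← p.mk_rep, ← q.mk_rep]; simp only [h]

end LinearForms

namespace MvPolynomial

variable {σ R : Type*} [CommRing R]

def HasSeparatingForm (w : σ → R) (s : Set (σ → R)) (d : ℕ) : Prop :=
  ∃ F : MvPolynomial σ R, F.IsHomogeneous d ∧ (∀ v ∈ s, eval v F = 0) ∧ eval w F ≠ 0

theorem hasSeparatingForm_empty [Nontrivial R] (w : σ → R) : HasSeparatingForm w ∅ 0 :=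
  ⟨1, isHomogeneous_one σ R, by simp, by simp⟩

theorem HasSeparatingForm.union [NoZeroDivisors R] {w : σ → R} {s t : Set (σ → R)} {d e : ℕ}
    (hs : HasSeparatingForm w s d) (ht : HasSeparatingForm w t e) :
    HasSeparatingForm w (s ∪ t) (d + e) := by
  obtain ⟨F, hF, hFs, hFw⟩ := hs
  obtain ⟨G, hG, hGt, hGw⟩ := ht
  refine ⟨F * G, hF.mul hG, ?_, by simpa using mul_ne_zero hFw hGw⟩
  rintro v (hv | hv) <;> simp [hFs v, hGt v, hv]

theorem hasSeparatingForm_one_of_notMem_span {K : Type*} [Field K] [Fintype σ]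
    {w : σ → K} {s : Set (σ → K)} (hw : w ∉ Submodule.span K s) : HasSeparatingForm w s 1 := by
  classical
  obtain ⟨L, hLs, hLw⟩ := Submodule.exists_dual_forall_apply_eq_zero_of_notMem_span hw
  exact ⟨ofLinearForm L, isHomogeneous_ofLinearForm L, by simpa using hLs, by simpa using hLw⟩

theorem hasSeparatingForm_of_notMem_span_pair {K : Type*} [Field K] [Fintype σ]
    [DecidableEq (σ → K)] {w : σ → K} (T : Finset (σ → K))
    (h : ∀ u ∈ T, ∀ v ∈ T, w ∉ Submodule.span K {u, v}) :
    HasSeparatingForm w T ((T.card + 1) / 2) := by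
  induction T using Finset.strongInduction with
  | H T ih =>
  obtain hT | hT | hT : T.card = 0 ∨ T.card = 1 ∨ 1 < T.card := by omega
  · simpa [Finset.card_eq_zero.mp hT] using hasSeparatingForm_empty w
  · obtain ⟨u, rfl⟩ := Finset.card_eq_one.mp hT
    simpa using hasSeparatingForm_one_of_notMem_span (by simpa using h u (by simp) u (by simp))
  · obtain ⟨u, hu, v, hv, huv⟩ := Finset.one_lt_card.mp hT
    have huvT : {u, v} ⊆ T := Finset.insert_subset hu (Finset.singleton_subset_iff.mpr hv)
    have hrest := ih (T \ {u, v}) (Finset.sdiff_ssubset huvT (by simp))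
      fun a ha b hb => h a (Finset.sdiff_subset ha) b (Finset.sdiff_subset hb)
    have hcard : (T \ {u, v}).card + 2 = T.card := by
      rw [Finset.card_sdiff_of_subset huvT, Finset.card_pair huv]; omega
    have := (hasSeparatingForm_one_of_notMem_span (h u hu v hv)).union hrest
    rw [← Finset.coe_pair, ← Finset.coe_union, Finset.union_sdiff_of_subset huvT] at this
    convert this using 2
    omega

end MvPolynomial

theorem separating_polynomial_of_no_two_points_collinear_with_base_general
    (p₀ : Projectivization ℂ (Fin 3 → ℂ))
    (n : ℕ)
    (S : Finset (Projectivization ℂ (Fin 3 → ℂ))) (hS : S.card = n)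
    (hp₀ : p₀ ∉ S)
    (hline : ∀ L : (Fin 3 → ℂ) →ₗ[ℂ] ℂ, L ≠ 0 → L p₀.rep = 0 →
      ∀ p ∈ S, ∀ q ∈ S, L p.rep = 0 → L q.rep = 0 → p = q) :
    ∃ F : MvPolynomial (Fin 3) ℂ, F.IsHomogeneous ((n + 1) / 2) ∧
      (∀ p ∈ S, MvPolynomial.eval p.rep F = 0) ∧
      MvPolynomial.eval p₀.rep F ≠ 0 := by
  classical
  have hpair : ∀ u ∈ S.image Projectivization.rep, ∀ v ∈ S.image Projectivization.rep,
      p₀.rep ∉ Submodule.span ℂ {u, v} := by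
    simp only [Finset.forall_mem_image]
    intro p hp q hq
    by_cases hpq : p = q
    · rw [hpq, Set.pair_eq_singleton]
      exact Projectivization.rep_notMem_span_rep (ne_of_mem_of_not_mem hq hp₀).symm
    · exact notMem_span_pair_of_forall_dual (by simp)
        fun L hL hL₀ hLp hLq => hpq (hline L hL hL₀ p hp q hq hLp hLq)
  obtain ⟨F, hF, hFS, hFp₀⟩ := MvPolynomial.hasSeparatingForm_of_notMem_span_pair _ hpair
  rw [Finset.card_image_of_injective _ Projectivization.rep_injective, hS] at hF
  exact ⟨F, hF, fun p hp => hFS _ (Finset.mem_image_of_mem _ hp), hFp₀⟩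

/-- If `S` is a set of `n ≥ 2` points of `ℙ²(ℂ)` not containing `p₀`,
and every projective line through `p₀` contains at most one point of `S`, then there is
a homogeneous polynomial of degree `⌈n/2⌉` vanishing at every point of `S` but not
at `p₀`. -/
theorem separating_polynomial_of_no_two_points_collinear_with_base
    (p₀ : Projectivization ℂ (Fin 3 → ℂ))
    (n : ℕ) (hn : 2 ≤ n)
    (S : Finset (Projectivization ℂ (Fin 3 → ℂ))) (hS : S.card = n)
    (hp₀ : p₀ ∉ S)
    (hline : ∀ L : (Fin 3 → ℂ) →ₗ[ℂ] ℂ, L ≠ 0 → L p₀.rep = 0 →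
      ∀ p ∈ S, ∀ q ∈ S, L p.rep = 0 → L q.rep = 0 → p = q) :
    ∃ F : MvPolynomial (Fin 3) ℂ, F.IsHomogeneous ((n + 1) / 2) ∧
      (∀ p ∈ S, MvPolynomial.eval p.rep F = 0) ∧
      MvPolynomial.eval p₀.rep F ≠ 0 :=
  separating_polynomial_of_no_two_points_collinear_with_base_general p₀ n S hS hp₀ hline
end
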